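/- Let A_0, ..., A_{n-1} be finite idempotent algebras of a common signature, and suppose B_i is a minimal absorbing subalgebra of A_i for each i. Let R ≤_sd A_0 × ... × A_{n-1} be a subdirect product and let R' = R ∩ (B_0 × ... × B_{n-1}). If R' ≠ ∅, then R' is (the universe of) a subdirect product of B_0 × ... × B_{n-1}; that is, for each i, the projection of R' onto the i-th coordinate equals B_i. -/

import Mathlib

/-- A (functional) signature: a type of operation symbols, each with an arity. -/
structure Signature where
  ops : Type
  arity : ops → ℕ

/-- Terms of a signature in `n` variables. -/
inductive UTerm (σ : Signature) : ℕ → Type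
  | var : ∀ {n}, Fin n → UTerm σ n
  | app : ∀ {n} (f : σ.ops), (Fin (σ.arity f) → UTerm σ n) → UTerm σ n

/-- An algebra of signature `σ` on carrier `A`. -/
structure UAlgebra (σ : Signature) (A : Type) where
  interp : ∀ f : σ.ops, (Fin (σ.arity f) → A) → A

namespace UAlgebra

variable {σ : Signature} {A : Type}

/-- The term operation induced by a term. -/
def eval (Alg : UAlgebra σ A) {n : ℕ} : UTerm σ n → (Fin n → A) → A
  | .var i, env => env i
  | .app f ts, env => Alg.interp f fun j => Alg.eval (ts j) env

/-- An algebra is idempotent if every basic operation satisfies `f(a,…,a) = a`. -/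
def Idempotent (Alg : UAlgebra σ A) : Prop :=
  ∀ (f : σ.ops) (a : A), Alg.interp f (fun _ => a) = a

/-- A congruence: an equivalence relation compatible with the basic operations. -/
def IsCong (Alg : UAlgebra σ A) (θ : A → A → Prop) : Prop :=
  (∀ a, θ a a) ∧ (∀ a b, θ a b → θ b a) ∧ (∀ a b c, θ a b → θ b c → θ a c) ∧
  ∀ (f : σ.ops) (x y : Fin (σ.arity f) → A),
    (∀ j, θ (x j) (y j)) → θ (Alg.interp f x) (Alg.interp f y)

/-- A subuniverse: a subset closed under the basic operations. -/
def IsSubuniv (Alg : UAlgebra σ A) (B : Set A) : Prop :=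
  ∀ (f : σ.ops) (x : Fin (σ.arity f) → A), (∀ j, x j ∈ B) → Alg.interp f x ∈ B

/-- A simple algebra: more than one element, and the only congruences are `0` and `1`. -/
def Simple (Alg : UAlgebra σ A) : Prop :=
  (∃ a b : A, a ≠ b) ∧
  ∀ θ : A → A → Prop, Alg.IsCong θ → (∀ a b, θ a b ↔ a = b) ∨ (∀ a b, θ a b)

/-- An abelian algebra: for every `(ℓ+m)`-ary term operation `t` and tuples
`a b : Aᶩ`, `u v : Aᵐ`, `t(a,u) = t(a,v) ↔ t(b,u) = t(b,v)`. -/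
def Abelian (Alg : UAlgebra σ A) : Prop :=
  ∀ (ℓ m : ℕ) (t : UTerm σ (ℓ + m)) (a b : Fin ℓ → A) (u v : Fin m → A),
    (Alg.eval t (Fin.append a u) = Alg.eval t (Fin.append a v) ↔
      Alg.eval t (Fin.append b u) = Alg.eval t (Fin.append b v))

/-- `B` is an absorbing subalgebra of `A` with respect to the `k`-ary term `t`:
`B` is a (nonempty) subuniverse, and applying `t` to arguments all of which lie
in `B` except possibly one (arbitrary in `A`) lands in `B`. -/
def AbsorbingWith (Alg : UAlgebra σ A) (B : Set A) {k : ℕ} (t : UTerm σ k) : Prop :=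
  B.Nonempty ∧ Alg.IsSubuniv B ∧
  ∀ (j : Fin k) (x : Fin k → A), (∀ i, i ≠ j → x i ∈ B) → Alg.eval t x ∈ B

/-- `B ◁ A` : `B` is absorbing with respect to some term. -/
def Absorbing (Alg : UAlgebra σ A) (B : Set A) : Prop :=
  ∃ (k : ℕ) (t : UTerm σ k), Alg.AbsorbingWith B t

/-- `B ◁◁ A` : `B` is minimal among absorbing subuniverses of `A`. -/
def MinAbsorbing (Alg : UAlgebra σ A) (B : Set A) : Prop :=
  Alg.Absorbing B ∧ ∀ C : Set A, Alg.Absorbing C → C ⊆ B → C = B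

/-- A congruence of the subalgebra with universe `R`. -/
def IsCongOn (Alg : UAlgebra σ A) (R : Set A) (θ : A → A → Prop) : Prop :=
  (∀ a ∈ R, θ a a) ∧ (∀ a b, θ a b → θ b a) ∧ (∀ a b c, θ a b → θ b c → θ a c) ∧
  (∀ a b, θ a b → a ∈ R ∧ b ∈ R) ∧
  ∀ (f : σ.ops) (x y : Fin (σ.arity f) → A),
    (∀ j, θ (x j) (y j)) → θ (Alg.interp f x) (Alg.interp f y)

/-- The join of `θ₁` and `θ₂` in the congruence lattice of the subalgebra `R`
is the top congruence `1_R`. -/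
def JoinIsTop (Alg : UAlgebra σ A) (R : Set A) (θ₁ θ₂ : A → A → Prop) : Prop :=
  ∀ θ : A → A → Prop, Alg.IsCongOn R θ →
    (∀ a b, θ₁ a b → θ a b) → (∀ a b, θ₂ a b → θ a b) →
    ∀ a ∈ R, ∀ b ∈ R, θ a b

end UAlgebra

/-- Interpreting a `Fin 2`-indexed choice of the variables `x`, `y`. -/
def pick {A : Type} (x y : A) : Fin 2 → A := fun b => if b = 0 then x else y

/-- `t` is a common Taylor term for the family `Alg`: it is idempotent in every
algebra of the family, and for each coordinate `i` there is an identity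
`t(u_0,…,u_{n-1}) ≈ t(v_0,…,v_{n-1})` (each `u_j, v_j ∈ {x,y}`, `u_i = x`,
`v_i = y`) holding in every algebra of the family. -/
def IsTaylorFamily {σ : Signature} {ι : Type} {A : ι → Type}
    (Alg : ∀ i, UAlgebra σ (A i)) {n : ℕ} (t : UTerm σ n) : Prop :=
  ∃ u v : Fin n → Fin n → Fin 2,
    (∀ i : Fin n, u i i = 0 ∧ v i i = 1) ∧
    ∀ k : ι,
      (∀ a : A k, (Alg k).eval t (fun _ => a) = a) ∧
      ∀ (i : Fin n) (x y : A k),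
        (Alg k).eval t (fun j => pick x y (u i j)) =
        (Alg k).eval t (fun j => pick x y (v i j))

/-- Taylor term of a single algebra. -/
def IsTaylorFor {σ : Signature} {A : Type} (Alg : UAlgebra σ A) {n : ℕ}
    (t : UTerm σ n) : Prop :=
  IsTaylorFamily (fun _ : PUnit => Alg) t

/-- The product algebra of a family of algebras of a common signature. -/
def prodAlgebra {σ : Signature} {ι : Type} {A : ι → Type}
    (Alg : ∀ i, UAlgebra σ (A i)) : UAlgebra σ (∀ i, A i) :=
  ⟨fun f x i => (Alg i).interp f (fun j => x j i)⟩

/-- `R ≤_sd ∏ A_i` : `R` is a (nonempty) subuniverse of the product whose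
coordinate projections are all surjective. -/
def IsSubdirect {σ : Signature} {ι : Type} {A : ι → Type}
    (Alg : ∀ i, UAlgebra σ (A i)) (R : Set (∀ i, A i)) : Prop :=
  R.Nonempty ∧ (prodAlgebra Alg).IsSubuniv R ∧
  ∀ (i : ι) (a : A i), ∃ r ∈ R, r i = a

/-- The kernel `η_s` of the projection of `R` onto the coordinates in `s`,
as a relation (congruence of the subalgebra `R`). -/
def projKer {ι : Type} {A : ι → Type} (R : Set (∀ i, A i)) (s : Set ι) :
    (∀ i, A i) → (∀ i, A i) → Prop :=
  fun x y => x ∈ R ∧ y ∈ R ∧ ∀ i ∈ s, x i = y i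

/-- The kernels of the `i`-th and `j`-th coordinate projections of `R` coincide. -/
def kerEq {ι : Type} {A : ι → Type} (R : Set (∀ i, A i)) (i j : ι) : Prop :=
  ∀ x ∈ R, ∀ y ∈ R, (x i = y i ↔ x j = y j)
/-- A cube term: a `k`-ary idempotent term such that for each coordinate `i`
there is an identity `t(x_1,…,x_k) ≈ y` with each `x_j ∈ {x,y}` and `x_i = x`. -/
def IsCubeTerm {σ : Signature} {A : Type} (Alg : UAlgebra σ A) {k : ℕ}
    (t : UTerm σ k) : Prop :=
  (∀ a : A, Alg.eval t (fun _ => a) = a) ∧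
  ∀ i : Fin k, ∃ u : Fin k → Fin 2, u i = 0 ∧
    ∀ x y : A, Alg.eval t (fun j => pick x y (u j)) = y

/-- A term operation depends on its `j`-th argument. -/
def TermDependsOn {σ : Signature} {A : Type} (Alg : UAlgebra σ A) {k : ℕ}
    (t : UTerm σ k) (j : Fin k) : Prop :=
  ∃ (c : Fin k → A) (x y : A),
    Alg.eval t (Function.update c j x) ≠ Alg.eval t (Function.update c j y)

/-- `s` is a sink for `A`: every term operation depending on its `j`-th argument
returns `s` whenever `s` is placed in position `j`. -/
def IsSink {σ : Signature} {A : Type} (Alg : UAlgebra σ A) (s : A) : Prop :=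
  ∀ (k : ℕ) (t : UTerm σ k) (j : Fin k), TermDependsOn Alg t j →
    ∀ c : Fin k → A, Alg.eval t (Function.update c j s) = s

/-- `C(β, γ; δ)` : `β` centralizes `γ` modulo `δ`. -/
def Centralizes {σ : Signature} {A : Type} (Alg : UAlgebra σ A)
    (β γ δ : A → A → Prop) : Prop :=
  ∀ (ℓ m : ℕ) (t : UTerm σ (ℓ + m)) (a b : Fin ℓ → A) (u v : Fin m → A),
    (∀ i, β (a i) (b i)) → (∀ i, γ (u i) (v i)) →
    (δ (Alg.eval t (Fin.append a u)) (Alg.eval t (Fin.append a v)) ↔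
      δ (Alg.eval t (Fin.append b u)) (Alg.eval t (Fin.append b v)))

/-- The join `θ₁ ∨ θ₂` in the congruence lattice of `Alg`: the least congruence
containing `θ₁` and `θ₂`. -/
def conJoin {σ : Signature} {A : Type} (Alg : UAlgebra σ A)
    (θ₁ θ₂ : A → A → Prop) : A → A → Prop :=
  fun x y => ∀ θ : A → A → Prop, Alg.IsCong θ →
    (∀ a b, θ₁ a b → θ a b) → (∀ a b, θ₂ a b → θ a b) → θ x y

/-- The setoid determined by a congruence. -/
def congSetoid {σ : Signature} {A : Type} {Alg : UAlgebra σ A}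
    {δ : A → A → Prop} (h : Alg.IsCong δ) : Setoid A :=
  ⟨δ, ⟨h.1, fun hab => h.2.1 _ _ hab, fun hab hbc => h.2.2.1 _ _ _ hab hbc⟩⟩

/-- The quotient algebra `A/δ` (of a congruence-induced setoid). -/
noncomputable def quotAlgebra {σ : Signature} {A : Type} (Alg : UAlgebra σ A) (s : Setoid A) :
    UAlgebra σ (Quotient s) :=
  ⟨fun f x => Quotient.mk s (Alg.interp f (fun j => (x j).out))⟩

/-- The image `β/δ` of a congruence `β` on the quotient `A/δ`. -/
def quotCong {A : Type} (s : Setoid A) (β : A → A → Prop) :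
    Quotient s → Quotient s → Prop :=
  fun x y => ∃ a b : A, Quotient.mk s a = x ∧ Quotient.mk s b = y ∧ β a b

/-- Row-major pairing of indices: `(i, j) ↦ i * m + j`. -/
def pairIdx {l m : ℕ} (i : Fin l) (j : Fin m) : Fin (l * m) :=
  ⟨i.val * m + j.val, by
    have h1 : i.val * m + j.val < i.val * m + m := Nat.add_lt_add_left j.isLt _
    have h2 : i.val * m + m = (i.val + 1) * m := (Nat.succ_mul i.val m).symm
    have h3 : (i.val + 1) * m ≤ l * m :=
      Nat.mul_le_mul_right m (Nat.succ_le_of_lt i.isLt)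
    omega⟩

/-- Simultaneous substitution into a term. -/
def UTerm.bind {σ : Signature} {n k : ℕ} : UTerm σ n → (Fin n → UTerm σ k) → UTerm σ k
  | .var i, s => s i
  | .app f ts, s => .app f (fun j => (ts j).bind s)

/-- The star composition `f ⋆ g` of terms: the `ℓm`-ary term
`(f ⋆ g)(a₁₁,…,a_{ℓm}) = f(g(a₁₁,…,a₁ₘ), …, g(a_{ℓ1},…,a_{ℓm}))`. -/
def starTerm {σ : Signature} {l m : ℕ} (f : UTerm σ l) (g : UTerm σ m) :
    UTerm σ (l * m) :=
  f.bind (fun i => g.bind (fun j => .var (pairIdx i j)))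

/-- Star composition on arity-indexed terms. -/
def sigStar {σ : Signature} (p q : Σ k, UTerm σ k) : Σ k, UTerm σ k :=
  ⟨p.1 * q.1, starTerm p.2 q.2⟩

/-- The left-associated iterated star `p ⋆ q₀ ⋆ q₁ ⋆ ⋯`. -/
def iterStar {σ : Signature} (p : Σ k, UTerm σ k) :
    List (Σ k, UTerm σ k) → Σ k, UTerm σ k
  | [] => p
  | q :: rest => iterStar (sigStar p q) rest

/-- `B` is an absorbing subuniverse of the subalgebra with universe `R`. -/
def AbsorbingIn {σ : Signature} {A : Type} (Alg : UAlgebra σ A) (R B : Set A) : Prop :=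
  B.Nonempty ∧ B ⊆ R ∧ Alg.IsSubuniv B ∧
  ∃ (k : ℕ) (t : UTerm σ k), ∀ (j : Fin k) (x : Fin k → A),
    (∀ i, i ≠ j → x i ∈ B) → x j ∈ R → Alg.eval t x ∈ B

/-!
Star composition of absorbing terms yields a single term `t` with respect to which every `Bⱼ`
is absorbing. The projection of `R ∩ ∏ Bⱼ` onto coordinate `i` is a nonempty subuniverse of
`Bᵢ`, and it absorbs `Aᵢ` with respect to `t`: lift the one argument outside it to `R` by
subdirectness and the others to `R ∩ ∏ Bⱼ`, and apply `t` in `R`. Minimality of `Bᵢ` then forces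
equality.
-/

theorem exists_pairIdx_eq {l m : ℕ} (p : Fin (l * m)) : ∃ i j, pairIdx i j = p := by
  have hm : 0 < m := Nat.pos_of_mul_pos_left p.pos
  refine ⟨⟨p / m, (Nat.div_lt_iff_lt_mul hm).mpr p.isLt⟩, ⟨p % m, Nat.mod_lt _ hm⟩, ?_⟩
  exact Fin.ext (Nat.div_add_mod' p m)

theorem pairIdx_injective2 {l m : ℕ} : Function.Injective2 (@pairIdx l m) := by
  intro i i' j j' h
  have h' : i.val * m + j.val = i'.val * m + j'.val := congrArg Fin.val h
  have hj : j.val = j'.val := by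
    simpa [Nat.mod_eq_of_lt j.isLt, Nat.mod_eq_of_lt j'.isLt] using congrArg (· % m) h'
  exact ⟨Fin.ext (Nat.eq_of_mul_eq_mul_right j.pos (by omega)), Fin.ext hj⟩

namespace UAlgebra

variable {σ : Signature} {A : Type}

theorem eval_bind (Alg : UAlgebra σ A) {n k : ℕ} (t : UTerm σ n) (s : Fin n → UTerm σ k)
    (env : Fin k → A) : Alg.eval (t.bind s) env = Alg.eval t fun i => Alg.eval (s i) env := by
  induction t with
  | var i => rfl
  | app f ts ih => exact congrArg (Alg.interp f) (funext ih)

theorem eval_starTerm (Alg : UAlgebra σ A) {l m : ℕ} (f : UTerm σ l) (g : UTerm σ m)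
    (x : Fin (l * m) → A) :
    Alg.eval (starTerm f g) x = Alg.eval f fun i => Alg.eval g fun j => x (pairIdx i j) := by
  simp only [starTerm, eval_bind]
  rfl

theorem IsSubuniv.inter {Alg : UAlgebra σ A} {B C : Set A} (hB : Alg.IsSubuniv B)
    (hC : Alg.IsSubuniv C) : Alg.IsSubuniv (B ∩ C) :=
  fun f x hx => ⟨hB f x fun j => (hx j).1, hC f x fun j => (hx j).2⟩

theorem IsSubuniv.eval_mem {Alg : UAlgebra σ A} {B : Set A} (hB : Alg.IsSubuniv B) {k : ℕ}
    (t : UTerm σ k) (x : Fin k → A) (hx : ∀ j, x j ∈ B) : Alg.eval t x ∈ B := by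
  induction t with
  | var i => exact hx i
  | app f ts ih => exact hB f _ ih

theorem AbsorbingWith.starTerm_left {Alg : UAlgebra σ A} {B : Set A} {l m : ℕ} {f : UTerm σ l}
    (hf : Alg.AbsorbingWith B f) (g : UTerm σ m) : Alg.AbsorbingWith B (starTerm f g) := by
  obtain ⟨hne, hsub, habs⟩ := hf
  refine ⟨hne, hsub, fun p x hx => ?_⟩
  obtain ⟨i₀, j₀, rfl⟩ := exists_pairIdx_eq p
  rw [eval_starTerm]
  exact habs i₀ _ fun i hi =>
    hsub.eval_mem g _ fun j => hx _ fun h => hi (pairIdx_injective2 h).1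

theorem AbsorbingWith.starTerm_right {Alg : UAlgebra σ A} {B : Set A} {l m : ℕ} (f : UTerm σ l)
    {g : UTerm σ m} (hg : Alg.AbsorbingWith B g) : Alg.AbsorbingWith B (starTerm f g) := by
  obtain ⟨hne, hsub, habs⟩ := hg
  refine ⟨hne, hsub, fun p x hx => ?_⟩
  obtain ⟨i₀, j₀, rfl⟩ := exists_pairIdx_eq p
  rw [eval_starTerm]
  exact hsub.eval_mem f _ fun i =>
    habs j₀ _ fun j hj => hx _ fun h => hj (pairIdx_injective2 h).2

end UAlgebra

section Product

variable {σ : Signature} {ι : Type} {A : ι → Type} {Alg : ∀ i, UAlgebra σ (A i)}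

theorem exists_common_absorbing_term [Finite ι] (B : ∀ i, Set (A i))
    (hB : ∀ i, (Alg i).Absorbing (B i)) :
    ∃ (k : ℕ) (t : UTerm σ k), ∀ i, (Alg i).AbsorbingWith (B i) t := by
  classical
  have := Fintype.ofFinite ι
  suffices ∀ s : Finset ι, ∃ (k : ℕ) (t : UTerm σ k), ∀ i ∈ s, (Alg i).AbsorbingWith (B i) t by
    obtain ⟨k, t, ht⟩ := this Finset.univ
    exact ⟨k, t, fun i => ht i (Finset.mem_univ i)⟩
  intro s
  induction s using Finset.induction_on with
  | empty => exact ⟨1, .var 0, by simp⟩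
  | insert a s _ ih =>
    obtain ⟨k, t, ht⟩ := ih
    obtain ⟨ka, ta, hta⟩ := hB a
    refine ⟨_, starTerm t ta, fun i hi => ?_⟩
    rcases Finset.mem_insert.mp hi with rfl | hi
    · exact hta.starTerm_right t
    · exact (ht i hi).starTerm_left ta

theorem prodAlgebra_eval_apply (Alg : ∀ i, UAlgebra σ (A i)) {k : ℕ} (t : UTerm σ k)
    (x : Fin k → ∀ i, A i) (i : ι) :
    (prodAlgebra Alg).eval t x i = (Alg i).eval t fun j => x j i := by
  induction t with
  | var j => rfl
  | app f ts ih => exact congrArg ((Alg i).interp f) (funext ih)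

theorem isSubuniv_pi {B : ∀ i, Set (A i)} (hB : ∀ i, (Alg i).IsSubuniv (B i)) :
    (prodAlgebra Alg).IsSubuniv {x | ∀ i, x i ∈ B i} :=
  fun f x hx i => hB i f (fun j => x j i) fun j => hx j i

theorem UAlgebra.IsSubuniv.image_apply {S : Set (∀ i, A i)}
    (hS : (prodAlgebra Alg).IsSubuniv S) (i : ι) :
    (Alg i).IsSubuniv ((fun x : ∀ j, A j => x i) '' S) := by
  intro f x hx
  choose r hrS hri using hx
  exact ⟨_, hS f r hrS, congrArg ((Alg i).interp f) (funext hri)⟩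

theorem absorbingWith_image_inter_pi {B : ∀ i, Set (A i)} {R : Set (∀ i, A i)}
    (hR : IsSubdirect Alg R) (hne : (R ∩ {x | ∀ j, x j ∈ B j}).Nonempty) {k : ℕ}
    {t : UTerm σ k} (ht : ∀ j, (Alg j).AbsorbingWith (B j) t) (i : ι) :
    (Alg i).AbsorbingWith ((fun x : ∀ j, A j => x i) '' (R ∩ {x | ∀ j, x j ∈ B j})) t := by
  have hsub := hR.2.1.inter (isSubuniv_pi fun j => (ht j).2.1)
  refine ⟨hne.image _, hsub.image_apply i, fun p x hx => ?_⟩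
  have hlift : ∀ q, ∃ r ∈ R, r i = x q ∧ (q ≠ p → ∀ j, r j ∈ B j) := by
    intro q
    by_cases hq : q = p
    · obtain ⟨r, hr, hri⟩ := hR.2.2 i (x q)
      exact ⟨r, hr, hri, absurd hq⟩
    · obtain ⟨r, ⟨hr, hrB⟩, hri⟩ := hx q hq
      exact ⟨r, hr, hri, fun _ => hrB⟩
  choose r hrR hri hrB using hlift
  refine ⟨(prodAlgebra Alg).eval t r, ⟨hR.2.1.eval_mem t r hrR, fun j => ?_⟩, ?_⟩
  · rw [prodAlgebra_eval_apply]
    exact (ht j).2.2 p _ fun q hq => hrB q hq j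
  · simp only [prodAlgebra_eval_apply, hri]

end Product

theorem mass_intersection_subdirect_general
    {σ : Signature} {n : ℕ} {A : Fin n → Type}
    (Alg : ∀ i, UAlgebra σ (A i))
    (B : ∀ i, Set (A i)) (hB : ∀ i, (Alg i).MinAbsorbing (B i))
    (R : Set (∀ i, A i)) (hR : IsSubdirect Alg R)
    (hne : (R ∩ {x | ∀ i, x i ∈ B i}).Nonempty) :
    ∀ i, (fun x : ∀ j, A j => x i) '' (R ∩ {x | ∀ j, x j ∈ B j}) = B i := by
  obtain ⟨k, t, ht⟩ := exists_common_absorbing_term B fun i => (hB i).1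
  intro i
  refine (hB i).2 _ ⟨k, t, absorbingWith_image_inter_pi hR hne ht i⟩ ?_
  rintro _ ⟨x, ⟨-, hx⟩, rfl⟩
  exact hx i

/-- If `R ≤_sd ∏ Aᵢ`, `Bᵢ ◁◁ Aᵢ`, and `R' = R ∩ ∏ Bᵢ ≠ ∅`, then `R'` is a
subdirect product of `∏ Bᵢ`: each coordinate projection of `R'` equals `Bᵢ`. -/
theorem mass_intersection_subdirect
    {σ : Signature} {n : ℕ} {A : Fin n → Type} [∀ i, Finite (A i)]
    (Alg : ∀ i, UAlgebra σ (A i)) (hidem : ∀ i, (Alg i).Idempotent)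
    (B : ∀ i, Set (A i)) (hB : ∀ i, (Alg i).MinAbsorbing (B i))
    (R : Set (∀ i, A i)) (hR : IsSubdirect Alg R)
    (hne : (R ∩ {x | ∀ i, x i ∈ B i}).Nonempty) :
    ∀ i, (fun x : ∀ j, A j => x i) '' (R ∩ {x | ∀ j, x j ∈ B j}) = B i :=
  mass_intersection_subdirect_general Alg B hB R hR hne
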